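/- Suppose Σ_j 2^j η_j = ∞ and h̃ = ∞ (i.e. Σ_j 2^{(1−h̲/h)j} η_j < ∞ for every h > 0). Define ρ^h_j = j·2^{h̲ j/h} Σ_{j'>j} 2^{(1−h̲/h)j'} η_{j'−1} (j')². Then ρ^h_j is positive for all j and for every ε > 0, ρ^h_j = o(2^{εj}) as j → ∞. -/

import Mathlib

/-!
Write `A = 2^{h̲/h}`, `q = 2^{1-h̲/h} = 2/A` and `E = 2^ε`, so that
`ρ_j / E^j = j (A/E)^j Σ_{n>j} q^n η_{n-1} n²`. The hypothesis `h̃ = ∞` says that `Σ t^n η_n`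
converges for every `t < 2`, hence so does `Σ t^n η_{n-1} n²`. Taking `t = r q` with
`max 1 (A/E) < r < A` bounds the tail by `r^{-j}` times a constant, and `j (A/(rE))^j → 0`.
Positivity holds because the divergence of `Σ 2^j η_j` forces `η` to be nonzero infinitely often.
-/

/-- `ρ^h_j = j 2^{h̲ j/h} Σ_{j' > j} 2^{(1−h̲/h) j'} η_{j'−1} (j')²`. -/
noncomputable def rhoSeq (hlo h : ℝ) (η : ℕ → ℝ) (j : ℕ) : ℝ :=
  (j : ℝ) * (2:ℝ) ^ (hlo * j / h) *
    ∑' j' : ℕ, if j < j' then (2:ℝ) ^ ((1 - hlo / h) * j') * η (j' - 1) * (j' : ℝ) ^ 2 else 0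

open Filter Topology

lemma frequently_ne_zero_of_not_summable {g : ℕ → ℝ} (hg : ¬ Summable g) :
    ∃ᶠ n in atTop, g n ≠ 0 := by
  rw [Filter.Frequently]
  contrapose! hg
  exact Summable.of_norm_bounded_eventually_nat summable_zero
    (hg.mono fun n hn => by simp [hn])

lemma summable_pow_mul_sub_one {f : ℕ → ℝ} {t : ℝ} (hs : Summable fun n => t ^ n * f n) :
    Summable fun n => t ^ n * f (n - 1) := by
  refine (summable_nat_add_iff 1).mp ((hs.mul_left t).congr fun n => ?_)
  simp only [Nat.add_sub_cancel, pow_succ]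
  ring

lemma summable_pow_mul_mul_pow_of_lt {f : ℕ → ℝ} (hf : ∀ n, 0 ≤ f n) {s t : ℝ} (ht : 0 ≤ t)
    (hts : t < s) (hs : Summable fun n => s ^ n * f n) (k : ℕ) :
    Summable fun n => t ^ n * f n * (n : ℝ) ^ k := by
  have hs0 : 0 < s := ht.trans_lt hts
  have hratio : |t / s| < 1 := by
    rw [abs_of_nonneg (div_nonneg ht hs0.le), div_lt_one hs0]
    exact hts
  have hsmall : ∀ᶠ n : ℕ in atTop, (n : ℝ) ^ k * (t / s) ^ n ≤ 1 :=
    (tendsto_pow_const_mul_const_pow_of_abs_lt_one k hratio).eventually_le_const one_pos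
  refine Summable.of_norm_bounded_eventually_nat hs (hsmall.mono fun n hn => ?_)
  have hterm : t ^ n * f n * (n : ℝ) ^ k = ((n : ℝ) ^ k * (t / s) ^ n) * (s ^ n * f n) := by
    rw [div_pow]
    field_simp
  rw [Real.norm_of_nonneg (mul_nonneg (mul_nonneg (pow_nonneg ht n) (hf n)) (by positivity)), hterm]
  exact mul_le_of_le_one_left (mul_nonneg (pow_nonneg hs0.le n) (hf n)) hn

lemma summable_pow_mul_sub_one_mul_pow {f : ℕ → ℝ} (hf : ∀ n, 0 ≤ f n) {R : ℝ}
    (hR : ∀ t, 0 < t → t < R → Summable fun n => t ^ n * f n) {t : ℝ} (ht : 0 < t)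
    (htR : t < R) (k : ℕ) :
    Summable fun n => t ^ n * f (n - 1) * (n : ℝ) ^ k :=
  summable_pow_mul_mul_pow_of_lt (fun n => hf (n - 1)) ht.le (by linarith)
    (summable_pow_mul_sub_one (hR ((t + R) / 2) (by linarith) (by linarith))) k

lemma tsum_ite_lt_le_div_pow {u : ℕ → ℝ} (hu : ∀ n, 0 ≤ u n) {r : ℝ} (hr : 1 ≤ r)
    (hs : Summable fun n => r ^ n * u n) (j : ℕ) :
    ∑' n, (if j < n then u n else 0) ≤ (∑' n, r ^ n * u n) / r ^ j := by
  have hr0 : 0 < r := zero_lt_one.trans_le hr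
  have hle : ∀ n, (if j < n then u n else 0) ≤ r ^ n * u n / r ^ j := by
    intro n
    split_ifs with hjn
    · rw [le_div_iff₀ (pow_pos hr0 j), mul_comm]
      exact mul_le_mul_of_nonneg_right (pow_le_pow_right₀ hr hjn.le) (hu n)
    · exact div_nonneg (mul_nonneg (pow_nonneg hr0.le n) (hu n)) (pow_nonneg hr0.le j)
  have hnonneg : ∀ n, 0 ≤ if j < n then u n else 0 := fun n => by
    split_ifs
    exacts [hu n, le_rfl]
  calc ∑' n, (if j < n then u n else 0)
      ≤ ∑' n, r ^ n * u n / r ^ j :=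
        Summable.tsum_le_tsum hle (Summable.of_nonneg_of_le hnonneg hle (hs.div_const _))
          (hs.div_const _)
    _ = (∑' n, r ^ n * u n) / r ^ j := tsum_div_const

lemma tsum_ite_lt_pos {u : ℕ → ℝ} (hu : ∀ n, 0 ≤ u n) (hs : Summable u)
    (hfreq : ∃ᶠ n in atTop, u n ≠ 0) (j : ℕ) : 0 < ∑' n, if j < n then u n else 0 := by
  obtain ⟨k, hjk, hk⟩ := Filter.frequently_atTop.mp hfreq (j + 1)
  have hnonneg : ∀ n, 0 ≤ if j < n then u n else 0 := fun n => by
    split_ifs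
    exacts [hu n, le_rfl]
  refine Summable.tsum_pos (Summable.of_nonneg_of_le hnonneg (fun n => ?_) hs) hnonneg k ?_
  · split_ifs
    exacts [le_rfl, hu n]
  · rw [if_pos (by omega)]
    exact (hu k).lt_of_ne' hk

lemma tendsto_mul_pow_mul_tsum_ite_lt {u : ℕ → ℝ} (hu : ∀ n, 0 ≤ u n) {r B : ℝ} (hr : 1 ≤ r)
    (hB : 0 ≤ B) (hBr : B < r) (hs : Summable fun n => r ^ n * u n) :
    Tendsto (fun j : ℕ => j * B ^ j * ∑' n, if j < n then u n else 0) atTop (𝓝 0) := by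
  have hr0 : 0 < r := zero_lt_one.trans_le hr
  set S := ∑' n, r ^ n * u n
  have hlim : Tendsto (fun j : ℕ => S * (j * (B / r) ^ j)) atTop (𝓝 0) := by
    simpa using (tendsto_self_mul_const_pow_of_lt_one (div_nonneg hB hr0.le)
      ((div_lt_one hr0).mpr hBr)).const_mul S
  refine squeeze_zero (fun j => ?_) (fun j => ?_) hlim
  · exact mul_nonneg (by positivity) (tsum_nonneg fun n => by split_ifs; exacts [hu n, le_rfl])
  · calc (j : ℝ) * B ^ j * ∑' n, (if j < n then u n else 0)
        ≤ j * B ^ j * (S / r ^ j) :=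
          mul_le_mul_of_nonneg_left (tsum_ite_lt_le_div_pow hu hr hs j) (by positivity)
      _ = S * (j * (B / r) ^ j) := by
          rw [div_pow]
          field_simp

lemma summable_pow_mul_of_summable_two_rpow {hlo : ℝ} (h0 : 0 < hlo) {η : ℕ → ℝ}
    (hconv : ∀ h' : ℝ, 0 < h' → Summable fun j : ℕ => (2:ℝ) ^ ((1 - hlo / h') * j) * η j)
    {t : ℝ} (ht : 0 < t) (ht2 : t < 2) : Summable fun n => t ^ n * η n := by
  set b := Real.logb 2 t
  have hb : b < 1 := by
    rwa [Real.logb_lt_iff_lt_rpow one_lt_two ht, Real.rpow_one]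
  have hexp : 1 - hlo / (hlo / (1 - b)) = b := by
    field_simp
    ring
  convert hconv (hlo / (1 - b)) (div_pos h0 (by linarith)) using 2 with n
  rw [hexp, Real.rpow_mul_natCast zero_le_two, Real.rpow_logb two_pos (by norm_num) ht]

lemma rhoSeq_eq (hlo h : ℝ) (η : ℕ → ℝ) (j : ℕ) :
    rhoSeq hlo h η j = j * ((2:ℝ) ^ (hlo / h)) ^ j *
      ∑' n : ℕ, if j < n then ((2:ℝ) ^ (1 - hlo / h)) ^ n * η (n - 1) * (n : ℝ) ^ 2 else 0 := by
  simp only [rhoSeq, ← Real.rpow_mul_natCast zero_le_two, mul_div_right_comm]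

lemma rhoSeq_pos {hlo h : ℝ} {η : ℕ → ℝ} (hη : ∀ j, 0 ≤ η j)
    (hdiv : ¬ Summable fun j : ℕ => (2:ℝ) ^ j * η j)
    (hsum : Summable fun n : ℕ => ((2:ℝ) ^ (1 - hlo / h)) ^ n * η (n - 1) * (n : ℝ) ^ 2)
    {j : ℕ} (hj : 1 ≤ j) : 0 < rhoSeq hlo h η j := by
  set q := (2:ℝ) ^ (1 - hlo / h)
  have hq : 0 < q := by positivity
  have hfreq : ∃ᶠ n in atTop, q ^ n * η (n - 1) * (n : ℝ) ^ 2 ≠ 0 := by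
    refine Filter.frequently_atTop.mpr fun a => ?_
    obtain ⟨k, hak, hk⟩ := Filter.frequently_atTop.mp (frequently_ne_zero_of_not_summable hdiv) a
    refine ⟨k + 1, by omega, ?_⟩
    simp only [Nat.add_sub_cancel]
    exact mul_ne_zero (mul_ne_zero (pow_ne_zero _ hq.ne') (right_ne_zero_of_mul hk)) (by positivity)
  have htail := tsum_ite_lt_pos (fun n => by have := hη (n - 1); positivity) hsum hfreq j
  have hj0 : (0 : ℝ) < j := by exact_mod_cast hj
  rw [rhoSeq_eq]
  positivity

lemma tendsto_rhoSeq_div_two_rpow {hlo h : ℝ} (hpos : 0 < hlo / h) {η : ℕ → ℝ}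
    (hη : ∀ j, 0 ≤ η j)
    (hsum : ∀ t, 0 < t → t < 2 → Summable fun n : ℕ => t ^ n * η (n - 1) * (n : ℝ) ^ 2)
    {ε : ℝ} (hε : 0 < ε) :
    Tendsto (fun j : ℕ => rhoSeq hlo h η j / (2:ℝ) ^ (ε * j)) atTop (𝓝 0) := by
  set A := (2:ℝ) ^ (hlo / h)
  set q := (2:ℝ) ^ (1 - hlo / h)
  set E := (2:ℝ) ^ ε
  have hA : 1 < A := Real.one_lt_rpow one_lt_two hpos
  have hAq : A * q = 2 := by
    rw [← Real.rpow_add two_pos, add_sub_cancel, Real.rpow_one]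
  have hE : 1 < E := Real.one_lt_rpow one_lt_two hε
  have hAE : A / E < A := div_lt_self (by linarith) hE
  obtain ⟨r, hr, hrA⟩ := exists_between (max_lt hA hAE)
  obtain ⟨hr1, hAEr⟩ := max_lt_iff.mp hr
  have hrq : Summable fun n : ℕ => r ^ n * (q ^ n * η (n - 1) * (n : ℝ) ^ 2) := by
    refine (hsum (r * q) (by positivity) (by nlinarith)).congr fun n => ?_
    ring
  refine (tendsto_mul_pow_mul_tsum_ite_lt (fun n => by have := hη (n - 1); positivity) hr1.le
    (by positivity) hAEr hrq).congr fun j => ?_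
  rw [rhoSeq_eq, Real.rpow_mul_natCast zero_le_two, div_pow]
  field_simp
  ring

/-- if `Σ_j 2^j η_j = ∞` but `Σ_j 2^{(1−h̲/h')j} η_j < ∞` for every
`h' > 0` (i.e. `h̃ = ∞`), then `ρ^h_j > 0` for all `j ≥ 1` and `ρ^h_j = o(2^{εj})`
for every `ε > 0`. -/
theorem stmt16 (hlo h : ℝ) (h0 : 0 < hlo) (hh : hlo < h) (η : ℕ → ℝ) (hη : ∀ j, 0 ≤ η j)
    (hdiv : ¬ Summable fun j : ℕ => (2:ℝ) ^ j * η j)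
    (hconv : ∀ h' : ℝ, 0 < h' → Summable fun j : ℕ => (2:ℝ) ^ ((1 - hlo / h') * j) * η j) :
    (∀ j : ℕ, 1 ≤ j → 0 < rhoSeq hlo h η j) ∧
    ∀ ε : ℝ, 0 < ε →
      Filter.Tendsto (fun j : ℕ => rhoSeq hlo h η j / (2:ℝ) ^ (ε * j))
        Filter.atTop (nhds 0) := by
  have hpos : 0 < hlo / h := div_pos h0 (h0.trans hh)
  have hsum : ∀ t, 0 < t → t < 2 → Summable fun n : ℕ => t ^ n * η (n - 1) * (n : ℝ) ^ 2 :=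
    fun t ht ht2 => summable_pow_mul_sub_one_mul_pow hη
      (fun s hs hs2 => summable_pow_mul_of_summable_two_rpow h0 hconv hs hs2) ht ht2 2
  have hq2 : (2:ℝ) ^ (1 - hlo / h) < 2 :=
    Real.rpow_lt_self_of_one_lt one_lt_two (by linarith)
  exact ⟨fun j hj => rhoSeq_pos hη hdiv (hsum _ (by positivity) hq2) hj,
    fun ε hε => tendsto_rhoSeq_div_two_rpow hpos hη hsum hε⟩
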